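/- If G is a graph of order n and α ∈ [1/2, 1], then A_α(G) has at least n − γ(G) eigenvalues in the interval [α, Δ(G)] (with multiplicity), where γ(G) is the domination number and Δ(G) the maximum degree. -/

import Mathlib

/-- The `A_α`-matrix of a graph: `α·D(G) + (1-α)·A(G)`. -/
noncomputable def Aalpha {n : ℕ} (α : ℝ) (G : SimpleGraph (Fin n)) [DecidableRel G.Adj] :
    Matrix (Fin n) (Fin n) ℝ :=
  α • Matrix.diagonal (fun v => (G.degree v : ℝ)) + (1 - α) • G.adjMatrix ℝ

lemma Aalpha_isHermitian {n : ℕ} (α : ℝ) (G : SimpleGraph (Fin n)) [DecidableRel G.Adj] :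
    (Aalpha α G).IsHermitian := by
  apply Matrix.IsHermitian.ext
  intro i j
  by_cases h : G.Adj i j <;> by_cases hij : i = j <;>
    simp_all [Aalpha, Matrix.diagonal_apply, SimpleGraph.adj_comm, eq_comm]


/-- `D` is a dominating set of `G`. -/
def IsDomSet {n : ℕ} (G : SimpleGraph (Fin n)) (D : Finset (Fin n)) : Prop :=
  ∀ v : Fin n, v ∈ D ∨ ∃ u ∈ D, G.Adj u v

open Finset Matrix

/-!
For `α ≥ 1/2`, the quadratic form `x ⬝ᵥ A_α x` is a sum over ordered pairs of adjacent vertices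
of the nonnegative terms `α/2 (x_u² + x_v²) + (1-α) x_u x_v`. If `x` vanishes on a dominating set
`D`, every `v ∉ D` has a neighbour `u ∈ D`, and the pairs `(u, v)`, `(v, u)` alone contribute
`α x_v²`; hence `x ⬝ᵥ A_α x ≥ α ‖x‖²` on a subspace of codimension `|D|`. That subspace meets the
span of the eigenvectors with eigenvalue `< α` only in `0`, so there are at most `|D|` of them.
All eigenvalues are at most `Δ` because `Δ I - A_α = (Δ I - Deg) + (1-α) L` is positive
semidefinite for `α ≤ 1`.
-/

section

variable {ι : Type*} [Fintype ι]

theorem Orthonormal.dotProduct_sum_smul {κ : Type*} [Fintype κ] {v : κ → EuclideanSpace ℝ ι}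
    (hv : Orthonormal ℝ v) (y z : κ → ℝ) :
    (∑ k, y k • v k).ofLp ⬝ᵥ (∑ k, z k • v k).ofLp = ∑ k, y k * z k := by
  rw [dotProduct_comm, ← star_trivial (∑ k, y k • v k).ofLp,
    ← EuclideanSpace.inner_eq_star_dotProduct, hv.inner_sum]
  simp

theorem Matrix.mulVec_sum_smul_of_forall_mulVec_eq_smul {A : Matrix ι ι ℝ} {κ : Type*}
    [Fintype κ] {v : κ → EuclideanSpace ℝ ι} {μ : κ → ℝ} (hAv : ∀ k, A *ᵥ v k = μ k • v k)
    (y : κ → ℝ) :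
    A *ᵥ (∑ k, y k • v k).ofLp = (∑ k, (μ k * y k) • v k).ofLp := by
  simp [WithLp.ofLp_sum, mulVec_sum, mulVec_smul, hAv, smul_smul, mul_comm]

theorem Matrix.IsHermitian.eigenvalues_le_of_dotProduct_mulVec_le [DecidableEq ι]
    {A : Matrix ι ι ℝ} (hA : A.IsHermitian) {c : ℝ}
    (h : ∀ x : ι → ℝ, x ⬝ᵥ (A *ᵥ x) ≤ c * (x ⬝ᵥ x)) (i : ι) : hA.eigenvalues i ≤ c := by
  have hunit : (hA.eigenvectorBasis i : ι → ℝ) ⬝ᵥ hA.eigenvectorBasis i = 1 := by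
    have := hA.eigenvectorBasis.inner_eq_one i
    rwa [EuclideanSpace.inner_eq_star_dotProduct, star_trivial] at this
  simpa [hA.mulVec_eigenvectorBasis, hunit] using h (hA.eigenvectorBasis i)

theorem Matrix.IsHermitian.card_eigenvalues_lt_le [DecidableEq ι] {A : Matrix ι ι ℝ}
    (hA : A.IsHermitian) {c : ℝ} (D : Finset ι)
    (hD : ∀ x : ι → ℝ, (∀ i ∈ D, x i = 0) → c * (x ⬝ᵥ x) ≤ x ⬝ᵥ (A *ᵥ x)) :
    #{i | hA.eigenvalues i < c} ≤ #D := by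
  set S := univ.filter fun i => hA.eigenvalues i < c
  by_contra! hcard
  let v : S → EuclideanSpace ℝ ι := fun s => hA.eigenvectorBasis s
  have hv : Orthonormal ℝ v := hA.eigenvectorBasis.orthonormal.comp _ Subtype.val_injective
  let restrict : EuclideanSpace ℝ ι →ₗ[ℝ] (D → ℝ) :=
    { toFun := fun x d => x d, map_add' := fun _ _ => rfl, map_smul' := fun _ _ => rfl }
  obtain ⟨y, hy_ker, hy⟩ := Submodule.exists_mem_ne_zero_of_ne_bot <|
    LinearMap.ker_ne_bot_of_finrank_lt (f := restrict ∘ₗ Fintype.linearCombination ℝ v)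
      (by simpa using hcard)
  set x := ∑ s, y s • v s
  have hxD : ∀ i ∈ D, x i = 0 := fun i hi => congr_fun hy_ker ⟨i, hi⟩
  have hxx : x.ofLp ⬝ᵥ x.ofLp = ∑ s, y s * y s := hv.dotProduct_sum_smul y y
  have hxAx : x.ofLp ⬝ᵥ (A *ᵥ x.ofLp) = ∑ s, y s * (hA.eigenvalues s * y s) := by
    rw [mulVec_sum_smul_of_forall_mulVec_eq_smul (v := v) (μ := fun s => hA.eigenvalues s)
      (fun s => hA.mulVec_eigenvectorBasis s), hv.dotProduct_sum_smul]
  obtain ⟨s₀, hs₀⟩ := Function.ne_iff.mp hy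
  have hlt : ∑ s, y s * (hA.eigenvalues s * y s) < c * ∑ s, y s * y s := by
    rw [mul_sum]
    refine sum_lt_sum (fun s _ => ?_) ⟨s₀, mem_univ _, ?_⟩
    · nlinarith [(mem_filter.mp s.2).2, mul_self_nonneg (y s)]
    · nlinarith [(mem_filter.mp s₀.2).2, mul_self_pos.mpr hs₀]
  have hge := hD x.ofLp hxD
  rw [hxx, hxAx] at hge
  exact hge.not_gt hlt

end

theorem SimpleGraph.sum_sum_ite_adj_comm {V M : Type*} [Fintype V] [AddCommMonoid M]
    (G : SimpleGraph V) [DecidableRel G.Adj] (f : V → V → M) :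
    ∑ i, ∑ j, (if G.Adj i j then f i j else 0) = ∑ i, ∑ j, if G.Adj i j then f j i else 0 := by
  rw [sum_comm]
  simp_rw [G.adj_comm]

section

variable {n : ℕ} (G : SimpleGraph (Fin n)) [DecidableRel G.Adj]

theorem Aalpha_eq_degMatrix_sub_lapMatrix (α : ℝ) :
    Aalpha α G = G.degMatrix ℝ - (1 - α) • G.lapMatrix ℝ := by
  rw [Aalpha, SimpleGraph.lapMatrix, SimpleGraph.degMatrix]
  module

theorem dotProduct_mulVec_Aalpha_le_maxDegree {α : ℝ} (hα1 : α ≤ 1) (x : Fin n → ℝ) :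
    x ⬝ᵥ (Aalpha α G *ᵥ x) ≤ G.maxDegree * (x ⬝ᵥ x) := by
  have hlap : 0 ≤ x ⬝ᵥ (G.lapMatrix ℝ *ᵥ x) := by
    simpa using (G.posSemidef_lapMatrix ℝ).dotProduct_mulVec_nonneg x
  have hdeg : x ⬝ᵥ (G.degMatrix ℝ *ᵥ x) ≤ G.maxDegree * (x ⬝ᵥ x) := by
    rw [G.dotProduct_mulVec_degMatrix, dotProduct, mul_sum]
    refine sum_le_sum fun i _ => ?_
    have : (G.degree i : ℝ) ≤ G.maxDegree := by exact_mod_cast G.degree_le_maxDegree i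
    nlinarith [mul_self_nonneg (x i)]
  rw [Aalpha_eq_degMatrix_sub_lapMatrix, sub_mulVec, dotProduct_sub, smul_mulVec,
    dotProduct_smul, smul_eq_mul]
  nlinarith

theorem dotProduct_mulVec_Aalpha_eq_sum_adj (α : ℝ) (x : Fin n → ℝ) :
    x ⬝ᵥ (Aalpha α G *ᵥ x) = ∑ i, ∑ j,
      if G.Adj i j then α / 2 * (x i ^ 2 + x j ^ 2) + (1 - α) * (x i * x j) else 0 := by
  have hdeg : x ⬝ᵥ (G.degMatrix ℝ *ᵥ x) = ∑ i, ∑ j, if G.Adj i j then x i ^ 2 else 0 := by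
    simp only [G.dotProduct_mulVec_degMatrix, G.degree_eq_sum_if_adj, sum_mul, ite_mul,
      one_mul, zero_mul, sq]
  have hlap := G.lapMatrix_toLinearMap₂' ℝ x
  rw [toLinearMap₂'_apply'] at hlap
  have hsym := G.sum_sum_ite_adj_comm fun i j => x i ^ 2
  have hterm : ∀ i j, (if G.Adj i j then α / 2 * (x i ^ 2 + x j ^ 2) + (1 - α) * (x i * x j)
      else 0) = ((if G.Adj i j then x i ^ 2 else 0) + (if G.Adj i j then x j ^ 2 else 0)) / 2
        - (1 - α) / 2 * (if G.Adj i j then (x i - x j) ^ 2 else 0) := by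
    intro i j
    split_ifs <;> ring
  simp only [hterm, sum_sub_distrib, sum_add_distrib, ← sum_div, ← mul_sum]
  rw [Aalpha_eq_degMatrix_sub_lapMatrix, sub_mulVec, dotProduct_sub, smul_mulVec,
    dotProduct_smul, smul_eq_mul, hdeg, hlap, ← hsym]
  ring

theorem sum_sq_le_sum_adj_mem_of_isDomSet {D : Finset (Fin n)} (hD : IsDomSet G D)
    {x : Fin n → ℝ} (hx : ∀ i ∈ D, x i = 0) :
    ∑ i, x i ^ 2 ≤ ∑ i, ∑ j, if G.Adj i j then (if j ∈ D then x i ^ 2 else 0) else 0 := by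
  refine sum_le_sum fun i _ => ?_
  rcases hD i with hi | ⟨u, hu, hui⟩
  · simp [hx i hi]
  · have hnonneg : ∀ j ∈ univ, 0 ≤ if G.Adj i j then (if j ∈ D then x i ^ 2 else 0) else 0 :=
      fun j _ => by split_ifs <;> positivity
    simpa [hui.symm, hu] using single_le_sum hnonneg (mem_univ u)

theorem mul_dotProduct_self_le_dotProduct_mulVec_Aalpha {α : ℝ} (hα0 : 1 / 2 ≤ α)
    {D : Finset (Fin n)} (hD : IsDomSet G D) {x : Fin n → ℝ} (hx : ∀ i ∈ D, x i = 0) :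
    α * (x ⬝ᵥ x) ≤ x ⬝ᵥ (Aalpha α G *ᵥ x) := by
  set g : Fin n → Fin n → ℝ := fun i j => if j ∈ D then x i ^ 2 else 0
  have hterm : ∀ i j,
      α / 2 * (g i j + g j i) ≤ α / 2 * (x i ^ 2 + x j ^ 2) + (1 - α) * (x i * x j) := by
    intro i j
    by_cases hi : i ∈ D <;> by_cases hj : j ∈ D <;> simp [g, hi, hj, hx]
    nlinarith [sq_nonneg (x i + x j), sq_nonneg (x i - x j)]
  calc α * (x ⬝ᵥ x) = α * ∑ i, x i ^ 2 := by simp [dotProduct, sq]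
    _ ≤ α * ∑ i, ∑ j, if G.Adj i j then g i j else 0 := by
        exact mul_le_mul_of_nonneg_left (sum_sq_le_sum_adj_mem_of_isDomSet G hD hx) (by linarith)
    _ = ∑ i, ∑ j, if G.Adj i j then α / 2 * (g i j + g j i) else 0 := by
        have hsplit : ∀ i j, (if G.Adj i j then α / 2 * (g i j + g j i) else 0) =
            α / 2 * ((if G.Adj i j then g i j else 0) + (if G.Adj i j then g j i else 0)) := by
          intro i j
          split_ifs <;> ring
        simp only [hsplit, ← mul_sum, sum_add_distrib, ← G.sum_sum_ite_adj_comm g]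
        ring
    _ ≤ _ := by
        rw [dotProduct_mulVec_Aalpha_eq_sum_adj]
        gcongr with i _ j _
        split_ifs
        · exact hterm i j
        · rfl

end

open Finset in
/-- For `α ∈ [1/2, 1]`, `A_α(G)` has at least `n − γ(G)` eigenvalues in `[α, Δ(G)]`
(with multiplicity). -/
theorem Aalpha_count_ge_order_sub_domination (n : ℕ) (G : SimpleGraph (Fin n))
    [DecidableRel G.Adj] (α : ℝ) (hα0 : 1 / 2 ≤ α) (hα1 : α ≤ 1)
    (γ : ℕ) (hγ : IsLeast {k | ∃ D : Finset (Fin n), IsDomSet G D ∧ D.card = k} γ) :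
    n - γ ≤ (univ.filter fun i : Fin n =>
        α ≤ (Aalpha_isHermitian α G).eigenvalues i ∧
          (Aalpha_isHermitian α G).eigenvalues i ≤ (G.maxDegree : ℝ)).card := by
  obtain ⟨D, hD, rfl⟩ := hγ.1
  set hA := Aalpha_isHermitian α G
  have hlow : #{i | hA.eigenvalues i < α} ≤ #D :=
    hA.card_eigenvalues_lt_le D fun _ hx =>
      mul_dotProduct_self_le_dotProduct_mulVec_Aalpha G hα0 hD hx
  have hup : ∀ i, hA.eigenvalues i ≤ G.maxDegree :=
    hA.eigenvalues_le_of_dotProduct_mulVec_le (dotProduct_mulVec_Aalpha_le_maxDegree G hα1)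
  have hsplit := card_filter_add_card_filter_not (s := univ) fun i => α ≤ hA.eigenvalues i
  simp only [hup, and_true, not_le, card_univ, Fintype.card_fin] at hsplit ⊢
  omega
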